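/- arXiv:2003.05425 — 7 statements merged into one kernel-verified Lean document; each statement's English description precedes it below -/
import Mathlib

section
/- Let the kernel constraints hold: K_neigh(θ − g) = ρ_out(−g) · K_neigh(θ) · ρ_in(g) for all θ, g ∈ ℝ, and K_self = ρ_out(−g) · K_self · ρ_in(g) for all g ∈ ℝ. Then the gauge equivariant mesh convolution is gauge equivariant: for every k ∈ ℕ, every family of neighbour angles θ_1, …, θ_k ∈ ℝ, every family of transported neighbour feature vectors ĥ_1, …, ĥ_k ∈ ℝ^{C_in}, every centre feature vector f_p ∈ ℝ^{C_in}, and every gauge transformation angle g ∈ ℝ, one has K_self · (ρ_in(−g) · f_p) + Σ_{q=1}^{k} K_neigh(θ_q − g) · (ρ_in(−g) · ĥ_q) = ρ_out(−g) · ( K_self · f_p + Σ_{q=1}^{k} K_neigh(θ_q) · ĥ_q ). -/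
open Matrix

/-- gauge equivariance of the GEM-CNN convolution, given the
kernel constraints. -/
theorem gem_conv_gauge_equivariant
    (Cin Cout : ℕ) (hCin : 0 < Cin) (hCout : 0 < Cout)
    (ρin : ℝ → Matrix (Fin Cin) (Fin Cin) ℝ)
    (ρout : ℝ → Matrix (Fin Cout) (Fin Cout) ℝ)
    (hρin_mul : ∀ a b : ℝ, ρin (a + b) = ρin a * ρin b)
    (hρin_one : ρin 0 = 1)
    (hρout_mul : ∀ a b : ℝ, ρout (a + b) = ρout a * ρout b)
    (hρout_one : ρout 0 = 1)
    (Kself : Matrix (Fin Cout) (Fin Cin) ℝ)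
    (Kneigh : ℝ → Matrix (Fin Cout) (Fin Cin) ℝ)
    (hKneigh : ∀ θ g : ℝ, Kneigh (θ - g) = ρout (-g) * Kneigh θ * ρin g)
    (hKself : ∀ g : ℝ, Kself = ρout (-g) * Kself * ρin g) :
    ∀ (k : ℕ) (θ : Fin k → ℝ) (h : Fin k → (Fin Cin → ℝ))
      (fp : Fin Cin → ℝ) (g : ℝ),
      Kself.mulVec ((ρin (-g)).mulVec fp)
        + ∑ q : Fin k, (Kneigh (θ q - g)).mulVec ((ρin (-g)).mulVec (h q))
      = (ρout (-g)).mulVec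
          (Kself.mulVec fp + ∑ q : Fin k, (Kneigh (θ q)).mulVec (h q)) := by
  intro k θ h fp g
  have hinv : ρin g * ρin (-g) = 1 := by
    rw [← hρin_mul, add_neg_cancel, hρin_one]
  have key : ∀ M : Matrix (Fin Cout) (Fin Cin) ℝ,
      (ρout (-g) * M * ρin g) * ρin (-g) = ρout (-g) * M := by
    intro M; rw [Matrix.mul_assoc, hinv, Matrix.mul_one]
  rw [Matrix.mulVec_add]
  congr 1
  · rw [Matrix.mulVec_mulVec, Matrix.mulVec_mulVec, ← key Kself, ← hKself g]
  · rw [show (ρout (-g)) *ᵥ (∑ q : Fin k, (Kneigh (θ q)) *ᵥ (h q))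
        = ∑ q : Fin k, (ρout (-g)) *ᵥ ((Kneigh (θ q)) *ᵥ (h q)) by
      simp only [← Matrix.mulVecLin_apply, map_sum]]
    refine Finset.sum_congr rfl fun q _ => ?_
    rw [Matrix.mulVec_mulVec, Matrix.mulVec_mulVec, hKneigh, key]
end

section
/- Characterization of equivariant kernels from ρ_0 to ρ_m (m ≥ 1): a function K : ℝ → ℝ² satisfies K(θ − g) = ρ_m(−g) · K(θ) for all θ, g ∈ ℝ if and only if there exist constants a, b ∈ ℝ such that K(θ) = a · (cos(m θ), sin(m θ)) + b · (sin(m θ), −cos(m θ)) for all θ ∈ ℝ. -/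
open Matrix Real

/-- The real irreducible representation of `SO(2)` of order `n`. -/
noncomputable def rho (n : ℕ) (g : ℝ) : Matrix (Fin 2) (Fin 2) ℝ :=
  !![Real.cos (n * g), -Real.sin (n * g); Real.sin (n * g), Real.cos (n * g)]

/-- characterization of equivariant kernels from `ρ₀` to `ρ_m`. -/
theorem kernel_rho0_to_rhom (m : ℕ) (hm : 1 ≤ m) (K : ℝ → (Fin 2 → ℝ)) :
    (∀ θ g : ℝ, K (θ - g) = (rho m (-g)).mulVec (K θ)) ↔
    ∃ a b : ℝ, ∀ θ : ℝ,
      K θ = a • ![Real.cos (m * θ), Real.sin (m * θ)]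
            + b • ![Real.sin (m * θ), -Real.cos (m * θ)] := by
  constructor
  · intro h
    refine ⟨K 0 0, -(K 0 1), fun θ => ?_⟩
    have h1 := h 0 (-θ)
    simp only [zero_sub, neg_neg] at h1
    rw [h1]
    funext i
    fin_cases i <;>
      simp [rho, mulVec, dotProduct, Fin.sum_univ_two, mul_comm] <;> ring
  · intro ⟨a, b, h⟩ θ g
    rw [h, h]
    funext i
    have e0 : Real.cos (↑m*(θ-g)) = Real.cos (↑m*θ)*Real.cos (↑m*g)+Real.sin (↑m*θ)*Real.sin (↑m*g) := by
      rw [mul_sub, Real.cos_sub]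
    have e1 : Real.sin (↑m*(θ-g)) = Real.sin (↑m*θ)*Real.cos (↑m*g)-Real.cos (↑m*θ)*Real.sin (↑m*g) := by
      rw [mul_sub, Real.sin_sub]
    fin_cases i <;>
      simp [rho, mulVec, dotProduct, Fin.sum_univ_two, e0, e1,
        Real.cos_neg, Real.sin_neg] <;> ring
end

section
/- Characterization of equivariant kernels from ρ_n to ρ_0 (n ≥ 1): a function K : ℝ → ℝ² (regarded as a row vector for each angle) satisfies K(θ − g) = K(θ) · ρ_n(g) for all θ, g ∈ ℝ if and only if there exist constants a, b ∈ ℝ such that K(θ) = a · (cos(n θ), sin(n θ)) + b · (sin(n θ), −cos(n θ)) for all θ ∈ ℝ. -/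
open Matrix Real

/-- characterization of equivariant kernels from `ρ_n` to `ρ₀`. -/
theorem kernel_rhon_to_rho0 (n : ℕ) (hn : 1 ≤ n)
    (K : ℝ → Matrix (Fin 1) (Fin 2) ℝ) :
    (∀ θ g : ℝ, K (θ - g) = K θ * rho n g) ↔
    ∃ a b : ℝ, ∀ θ : ℝ,
      K θ = a • !![Real.cos (n * θ), Real.sin (n * θ)]
            + b • !![Real.sin (n * θ), -Real.cos (n * θ)] := by
  constructor
  · intro h
    refine ⟨K 0 0 0, -(K 0 0 1), fun θ => ?_⟩
    have h1 := h 0 (-θ)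
    rw [zero_sub, neg_neg] at h1
    rw [h1]
    ext i j
    fin_cases i <;> fin_cases j <;>
      simp [rho, Matrix.mul_apply, Fin.sum_univ_two, mul_neg, Real.cos_neg,
        Real.sin_neg] <;> ring
  · rintro ⟨a, b, hab⟩ θ g
    rw [hab, hab]
    ext i j
    fin_cases i <;> fin_cases j <;>
      simp [rho, Matrix.mul_apply, Fin.sum_univ_two, mul_sub, Real.cos_sub,
        Real.sin_sub] <;> ring
end

section
/- Characterization of equivariant kernels from ρ_n to ρ_m (n, m ≥ 1): a function K : ℝ → Matrix(2, 2, ℝ) satisfies K(θ − g) = ρ_m(−g) · K(θ) · ρ_n(g) for all θ, g ∈ ℝ if and only if there exist constants a₁, a₂, a₃, a₄ ∈ ℝ such that for all θ, K(θ) = a₁·[[c₋, −s₋],[s₋, c₋]] + a₂·[[s₋, c₋],[−c₋, s₋]] + a₃·[[c₊, s₊],[s₊, −c₊]] + a₄·[[−s₊, c₊],[c₊, s₊]], where c₋ = cos((m−n)θ), s₋ = sin((m−n)θ), c₊ = cos((m+n)θ), s₊ = sin((m+n)θ). In particular, the space of such kernels is 4-dimensional and this list of basis kernels is complete. -/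
open Matrix Real

lemma rho_mul (k : ℕ) (a b : ℝ) : rho k a * rho k b = rho k (a + b) := by
  ext i j
  fin_cases i <;> fin_cases j <;>
    simp [rho, Matrix.mul_apply, Fin.sum_univ_two, mul_add, Real.cos_add, Real.sin_add] <;>
    ring

lemma key (n m : ℕ) (a₁ a₂ a₃ a₄ θ : ℝ) :
    rho m θ * !![a₁ + a₃, a₂ + a₄; a₄ - a₂, a₁ - a₃] * rho n (-θ) =
      a₁ • !![Real.cos (((m : ℝ) - n) * θ), -Real.sin (((m : ℝ) - n) * θ);
              Real.sin (((m : ℝ) - n) * θ),  Real.cos (((m : ℝ) - n) * θ)]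
      + a₂ • !![Real.sin (((m : ℝ) - n) * θ),  Real.cos (((m : ℝ) - n) * θ);
                -Real.cos (((m : ℝ) - n) * θ), Real.sin (((m : ℝ) - n) * θ)]
      + a₃ • !![Real.cos (((m : ℝ) + n) * θ),  Real.sin (((m : ℝ) + n) * θ);
                Real.sin (((m : ℝ) + n) * θ), -Real.cos (((m : ℝ) + n) * θ)]
      + a₄ • !![-Real.sin (((m : ℝ) + n) * θ), Real.cos (((m : ℝ) + n) * θ);
                Real.cos (((m : ℝ) + n) * θ),  Real.sin (((m : ℝ) + n) * θ)] := by
  ext i j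
  fin_cases i <;> fin_cases j <;>
    simp [rho, Matrix.mul_apply, Fin.sum_univ_two, sub_mul, add_mul,
      Real.cos_sub, Real.sin_sub, Real.cos_add, Real.sin_add, mul_neg] <;>
    ring

/-- characterization of equivariant kernels from `ρ_n` to `ρ_m`
for `n, m ≥ 1`.  Here `c₋ = cos((m−n)θ)`, `s₋ = sin((m−n)θ)`,
`c₊ = cos((m+n)θ)`, `s₊ = sin((m+n)θ)` (with `m − n` computed in `ℤ`). -/
theorem kernel_rhon_to_rhom (n m : ℕ) (hn : 1 ≤ n) (hm : 1 ≤ m)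
    (K : ℝ → Matrix (Fin 2) (Fin 2) ℝ) :
    (∀ θ g : ℝ, K (θ - g) = rho m (-g) * K θ * rho n g) ↔
    ∃ a₁ a₂ a₃ a₄ : ℝ, ∀ θ : ℝ,
      K θ =
        a₁ • !![Real.cos (((m : ℝ) - n) * θ), -Real.sin (((m : ℝ) - n) * θ);
                Real.sin (((m : ℝ) - n) * θ),  Real.cos (((m : ℝ) - n) * θ)]
        + a₂ • !![Real.sin (((m : ℝ) - n) * θ),  Real.cos (((m : ℝ) - n) * θ);
                  -Real.cos (((m : ℝ) - n) * θ), Real.sin (((m : ℝ) - n) * θ)]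
        + a₃ • !![Real.cos (((m : ℝ) + n) * θ),  Real.sin (((m : ℝ) + n) * θ);
                  Real.sin (((m : ℝ) + n) * θ), -Real.cos (((m : ℝ) + n) * θ)]
        + a₄ • !![-Real.sin (((m : ℝ) + n) * θ), Real.cos (((m : ℝ) + n) * θ);
                  Real.cos (((m : ℝ) + n) * θ),  Real.sin (((m : ℝ) + n) * θ)] := by
  constructor
  · intro h
    refine ⟨(K 0 0 0 + K 0 1 1) / 2, (K 0 0 1 - K 0 1 0) / 2,
      (K 0 0 0 - K 0 1 1) / 2, (K 0 0 1 + K 0 1 0) / 2, fun θ => ?_⟩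
    have h0 : K θ = rho m θ * K 0 * rho n (-θ) := by
      have := h 0 (-θ)
      simpa [rho] using this
    rw [h0, ← key n m]
    congr 1
    congr 1
    ext i j
    fin_cases i <;> fin_cases j <;> simp <;> ring
  · rintro ⟨a₁, a₂, a₃, a₄, hK⟩ θ g
    have hB : ∀ t : ℝ, K t = rho m t * !![a₁ + a₃, a₂ + a₄; a₄ - a₂, a₁ - a₃] * rho n (-t) := by
      intro t; rw [hK t, ← key n m]
    rw [hB, hB θ]
    simp only [← Matrix.mul_assoc]
    rw [rho_mul, Matrix.mul_assoc (rho m (-g + θ) * _), rho_mul,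
      show -g + θ = θ - g by ring, show -θ + g = -(θ - g) by ring]
end

section
/- The self-interaction kernel between distinct two-dimensional irreps vanishes: for integers n, m ≥ 1 with n ≠ m, if a matrix K ∈ Matrix(2, 2, ℝ) satisfies K = ρ_m(−g) · K · ρ_n(g) for all g ∈ ℝ, then K = 0. -/
open Matrix Real

/-- the self-interaction kernel between distinct two-dimensional
irreps vanishes. -/
theorem self_kernel_distinct_irreps_zero (n m : ℕ) (hn : 1 ≤ n) (hm : 1 ≤ m)
    (hnm : n ≠ m) (K : Matrix (Fin 2) (Fin 2) ℝ)
    (hK : ∀ g : ℝ, K = rho m (-g) * K * rho n g) :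
    K = 0 := by
  set a := K 0 0 with ha
  set b := K 0 1 with hb
  set c := K 1 0 with hc
  set d := K 1 1 with hd
  -- entrywise equations
  have hE : ∀ g : ℝ, ∀ i j : Fin 2, K i j = (rho m (-g) * K * rho n g) i j := by
    intro g i j; rw [← hK g]
  have h00 : ∀ g : ℝ, a = Real.cos (m*g) * (a * Real.cos (n*g) + b * Real.sin (n*g))
      + Real.sin (m*g) * (c * Real.cos (n*g) + d * Real.sin (n*g)) := by
    intro g
    have := hE g 0 0
    simp [rho, Matrix.mul_apply, Matrix.vecMul, dotProduct, Fin.sum_univ_two, mul_neg, Real.cos_neg, Real.sin_neg,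
      ← ha, ← hb, ← hc, ← hd] at this
    linarith [this]
  have h01 : ∀ g : ℝ, b = Real.cos (m*g) * (-a * Real.sin (n*g) + b * Real.cos (n*g))
      + Real.sin (m*g) * (-c * Real.sin (n*g) + d * Real.cos (n*g)) := by
    intro g
    have := hE g 0 1
    simp [rho, Matrix.mul_apply, Matrix.vecMul, dotProduct, Fin.sum_univ_two, mul_neg, Real.cos_neg, Real.sin_neg,
      ← ha, ← hb, ← hc, ← hd] at this
    linarith [this]
  have h10 : ∀ g : ℝ, c = -Real.sin (m*g) * (a * Real.cos (n*g) + b * Real.sin (n*g))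
      + Real.cos (m*g) * (c * Real.cos (n*g) + d * Real.sin (n*g)) := by
    intro g
    have := hE g 1 0
    simp [rho, Matrix.mul_apply, Matrix.vecMul, dotProduct, Fin.sum_univ_two, mul_neg, Real.cos_neg, Real.sin_neg,
      ← ha, ← hb, ← hc, ← hd] at this
    linarith [this]
  have h11 : ∀ g : ℝ, d = -Real.sin (m*g) * (-a * Real.sin (n*g) + b * Real.cos (n*g))
      + Real.cos (m*g) * (-c * Real.sin (n*g) + d * Real.cos (n*g)) := by
    intro g
    have := hE g 1 1
    simp [rho, Matrix.mul_apply, Matrix.vecMul, dotProduct, Fin.sum_univ_two, mul_neg, Real.cos_neg, Real.sin_neg,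
      ← ha, ← hb, ← hc, ← hd] at this
    linarith [this]
  -- combined identities
  have E1 : ∀ g : ℝ, a + d = (a + d) * Real.cos (((n:ℝ) - m) * g)
      + (b - c) * Real.sin (((n:ℝ) - m) * g) := by
    intro g
    have hcs : ((n:ℝ) - m) * g = (n:ℝ)*g - (m:ℝ)*g := by ring
    rw [hcs, Real.cos_sub, Real.sin_sub]
    have e1 := h00 g; have e2 := h11 g
    nlinarith [e1, e2]
  have E2 : ∀ g : ℝ, b - c = (b - c) * Real.cos (((n:ℝ) - m) * g)
      - (a + d) * Real.sin (((n:ℝ) - m) * g) := by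
    intro g
    have hcs : ((n:ℝ) - m) * g = (n:ℝ)*g - (m:ℝ)*g := by ring
    rw [hcs, Real.cos_sub, Real.sin_sub]
    have e1 := h01 g; have e2 := h10 g
    nlinarith [e1, e2]
  have E3 : ∀ g : ℝ, a - d = (a - d) * Real.cos (((n:ℝ) + m) * g)
      + (b + c) * Real.sin (((n:ℝ) + m) * g) := by
    intro g
    have hcs : ((n:ℝ) + m) * g = (n:ℝ)*g + (m:ℝ)*g := by ring
    rw [hcs, Real.cos_add, Real.sin_add]
    have e1 := h00 g; have e2 := h11 g
    nlinarith [e1, e2]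
  have E4 : ∀ g : ℝ, b + c = (b + c) * Real.cos (((n:ℝ) + m) * g)
      - (a - d) * Real.sin (((n:ℝ) + m) * g) := by
    intro g
    have hcs : ((n:ℝ) + m) * g = (n:ℝ)*g + (m:ℝ)*g := by ring
    rw [hcs, Real.cos_add, Real.sin_add]
    have e1 := h01 g; have e2 := h10 g
    nlinarith [e1, e2]
  -- specialize at suitable angles
  have hdiff : ((n:ℝ) - m) ≠ 0 := by
    intro h
    exact hnm (Nat.cast_injective (by linarith : (n:ℝ) = m))
  have hsum : ((n:ℝ) + m) ≠ 0 := by positivity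
  have hπ1 : ((n:ℝ) - m) * (Real.pi / ((n:ℝ) - m)) = Real.pi := by
    field_simp
  have hπ2 : ((n:ℝ) - m) * (Real.pi / (2 * ((n:ℝ) - m))) = Real.pi / 2 := by
    field_simp
  have hπ3 : ((n:ℝ) + m) * (Real.pi / ((n:ℝ) + m)) = Real.pi := by
    field_simp
  have hπ4 : ((n:ℝ) + m) * (Real.pi / (2 * ((n:ℝ) + m))) = Real.pi / 2 := by
    field_simp
  have hp : a + d = 0 := by
    have := E1 (Real.pi / ((n:ℝ) - m))
    rw [hπ1] at this
    simp [Real.cos_pi, Real.sin_pi] at this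
    linarith
  have hq : b - c = 0 := by
    have := E2 (Real.pi / ((n:ℝ) - m))
    rw [hπ1] at this
    simp [Real.cos_pi, Real.sin_pi] at this
    linarith
  have hr : a - d = 0 := by
    have := E3 (Real.pi / ((n:ℝ) + m))
    rw [hπ3] at this
    simp [Real.cos_pi, Real.sin_pi] at this
    linarith
  have hs : b + c = 0 := by
    have := E4 (Real.pi / ((n:ℝ) + m))
    rw [hπ3] at this
    simp [Real.cos_pi, Real.sin_pi] at this
    linarith
  have ha0 : a = 0 := by linarith
  have hd0 : d = 0 := by linarith
  have hb0 : b = 0 := by linarith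
  have hc0 : c = 0 := by linarith
  ext i j
  fin_cases i <;> fin_cases j <;>
    simp only [Matrix.zero_apply] <;>
    first
      | exact ha0 | exact hb0 | exact hc0 | exact hd0
end

section
/- Pointwise commutator bound for the regular nonlinearity: for all t ∈ ℝ, all δ with 0 ≤ δ ≤ 1, and every integer m ≥ 1, writing c_m(t) = cos(2π m t / N), one has |c_m(t) · y(t + δ) − c_m(t − δ) · y(t)| ≤ (2π L_f / N) · ( ‖∂x‖₁ + m · ‖x‖₁ ). -/
/-!
Write `c(s) = cos (2π m s / N)` and split the commutator as
`c(t) (y(t+δ) - y(t)) + (c(t) - c(t-δ)) y(t)`.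
Every harmonic `a cos(ω s) + b sin(ω s)` of `x` is `|ω| (|a| + |b|)`-Lipschitz, so `x` moves by at most
`(2π/N) ‖∂x‖₁` over a shift `|δ| ≤ 1`, and `y = f ∘ x` by at most `L_f` times that. In the second
term `c` moves by at most `2π m / N`, while `|y| ≤ L_f |x| ≤ L_f ‖x‖₁` because `f 0 = 0`.
-/

open Finset Real

lemma abs_mul_sub_mul_le (p q u v : ℝ) : |p * u - q * v| ≤ |p| * |u - v| + |p - q| * |v| :=
  calc |p * u - q * v| = |p * (u - v) + (p - q) * v| := by ring_nf
    _ ≤ |p| * |u - v| + |p - q| * |v| := by rw [← abs_mul, ← abs_mul]; exact abs_add_le _ _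

lemma abs_harmonic_le (a b θ : ℝ) : |a * cos θ + b * sin θ| ≤ |a| + |b| :=
  calc |a * cos θ + b * sin θ| ≤ |a| * |cos θ| + |b| * |sin θ| := by
        rw [← abs_mul, ← abs_mul]; exact abs_add_le _ _
    _ ≤ |a| * 1 + |b| * 1 := by gcongr; exacts [abs_cos_le_one θ, abs_sin_le_one θ]
    _ = |a| + |b| := by ring

lemma abs_harmonic_sub_le (a b θ φ : ℝ) :
    |(a * cos θ + b * sin θ) - (a * cos φ + b * sin φ)| ≤ (|a| + |b|) * |θ - φ| :=
  calc |(a * cos θ + b * sin θ) - (a * cos φ + b * sin φ)|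
        = |a * (cos θ - cos φ) + b * (sin θ - sin φ)| := by ring_nf
    _ ≤ |a| * |cos θ - cos φ| + |b| * |sin θ - sin φ| := by
        rw [← abs_mul, ← abs_mul]; exact abs_add_le _ _
    _ ≤ |a| * |θ - φ| + |b| * |θ - φ| :=
        add_le_add (mul_le_mul_of_nonneg_left (abs_cos_sub_cos_le θ φ) (abs_nonneg a))
          (mul_le_mul_of_nonneg_left (abs_sin_sub_sin_le θ φ) (abs_nonneg b))
    _ = (|a| + |b|) * |θ - φ| := by ring

section TrigPolynomial

variable {ι : Type*} {s : Finset ι} {c : ℝ} {a b : ι → ℝ} {x : ℝ → ℝ}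

lemma abs_le_of_eq_trigPolynomial {θ : ι → ℝ → ℝ}
    (hx : ∀ t, x t = c + ∑ i ∈ s, (a i * cos (θ i t) + b i * sin (θ i t))) (t : ℝ) :
    |x t| ≤ |c| + ∑ i ∈ s, (|a i| + |b i|) := by
  rw [hx]
  refine (abs_add_le _ _).trans (add_le_add_right ?_ _)
  exact (abs_sum_le_sum_abs _ _).trans (sum_le_sum fun i _ => abs_harmonic_le ..)

lemma abs_sub_le_of_eq_trigPolynomial {ω : ι → ℝ}
    (hx : ∀ t, x t = c + ∑ i ∈ s, (a i * cos (ω i * t) + b i * sin (ω i * t))) (u v : ℝ) :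
    |x u - x v| ≤ |u - v| * ∑ i ∈ s, |ω i| * (|a i| + |b i|) := by
  rw [hx, hx, add_sub_add_left_eq_sub, ← sum_sub_distrib, mul_sum]
  refine (abs_sum_le_sum_abs _ _).trans (sum_le_sum fun i _ => ?_)
  calc _ ≤ (|a i| + |b i|) * |ω i * u - ω i * v| := abs_harmonic_sub_le ..
    _ = |u - v| * (|ω i| * (|a i| + |b i|)) := by rw [← mul_sub, abs_mul]; ring

end TrigPolynomial

lemma abs_cos_two_pi_mul_div_sub_le (N m : ℕ) (u v : ℝ) :
    |cos (2 * π * m * u / N) - cos (2 * π * m * v / N)| ≤ |u - v| * (2 * π * m / N) :=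
  calc _ ≤ |2 * π * m * u / N - 2 * π * m * v / N| := abs_cos_sub_cos_le _ _
    _ = |u - v| * (2 * π * m / N) := by
        rw [show 2 * π * m * u / N - 2 * π * m * v / N = (u - v) * (2 * π * m / N) by ring,
          abs_mul, abs_of_nonneg (by positivity : (0 : ℝ) ≤ 2 * π * m / N)]

lemma abs_sub_le_of_eq_periodicTrigPolynomial {N : ℕ} {s : Finset ℕ} {c : ℝ} {a b : ℕ → ℝ}
    {x : ℝ → ℝ}
    (hx : ∀ t, x t = c + ∑ k ∈ s, (a k * cos (2 * π * k * t / N) + b k * sin (2 * π * k * t / N)))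
    (u v : ℝ) :
    |x u - x v| ≤ |u - v| * (2 * π / N * ∑ k ∈ s, k * (|a k| + |b k|)) := by
  have hx' : ∀ t, x t = c + ∑ k ∈ s,
      (a k * cos (2 * π * k / N * t) + b k * sin (2 * π * k / N * t)) := by
    simpa only [mul_div_right_comm _ _ (N : ℝ)] using hx
  convert abs_sub_le_of_eq_trigPolynomial hx' u v using 2
  rw [mul_sum]
  refine sum_congr rfl fun k _ => ?_
  rw [abs_of_nonneg (by positivity : (0 : ℝ) ≤ 2 * π * k / N)]
  ring

theorem regular_nonlinearity_pointwise_commutator_bound_general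
    (N B : ℕ)
    (x0 : ℝ) (xa xb : ℕ → ℝ) (x : ℝ → ℝ)
    (hx : ∀ t : ℝ, x t = x0 + ∑ m ∈ Finset.Icc 1 B,
      (xa m * Real.cos (2 * Real.pi * m * t / N)
        + xb m * Real.sin (2 * Real.pi * m * t / N)))
    (f : ℝ → ℝ) (Lf : ℝ) (hLf : 0 ≤ Lf)
    (hf : ∀ a b : ℝ, |f a - f b| ≤ Lf * |a - b|) (hf0 : f 0 = 0)
    (y : ℝ → ℝ) (hy : ∀ t : ℝ, y t = f (x t)) :
    ∀ (t δ : ℝ), 0 ≤ δ → δ ≤ 1 → ∀ m : ℕ, 1 ≤ m →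
      |Real.cos (2 * Real.pi * m * t / N) * y (t + δ)
        - Real.cos (2 * Real.pi * m * (t - δ) / N) * y t|
      ≤ (2 * Real.pi * Lf / N) *
          ((∑ k ∈ Finset.Icc 1 B, (k : ℝ) * (|xa k| + |xb k|))
            + (m : ℝ) * (|x0| + ∑ k ∈ Finset.Icc 1 B, (|xa k| + |xb k|))) := by
  intro t δ hδ0 hδ1 m _
  have hδ : |δ| ≤ 1 := abs_le.mpr ⟨by linarith, hδ1⟩
  have hx_shift : |x (t + δ) - x t| ≤ 2 * π / N * ∑ k ∈ Icc 1 B, k * (|xa k| + |xb k|) :=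
    (abs_sub_le_of_eq_periodicTrigPolynomial hx _ _).trans
      (mul_le_of_le_one_left (by positivity) (by rwa [add_sub_cancel_left]))
  have hc_shift : |cos (2 * π * m * t / N) - cos (2 * π * m * (t - δ) / N)| ≤ 2 * π * m / N :=
    (abs_cos_two_pi_mul_div_sub_le N m _ _).trans
      (mul_le_of_le_one_left (by positivity) (by rwa [sub_sub_cancel]))
  have hy_shift : |y (t + δ) - y t| ≤ Lf * (2 * π / N * ∑ k ∈ Icc 1 B, k * (|xa k| + |xb k|)) := by
    rw [hy, hy]
    exact (hf _ _).trans (by gcongr)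
  have hy_abs : |y t| ≤ Lf * (|x0| + ∑ k ∈ Icc 1 B, (|xa k| + |xb k|)) := by
    simpa [hy, hf0] using (hf (x t) 0).trans (by gcongr; simpa using abs_le_of_eq_trigPolynomial hx t)
  calc _ ≤ |cos (2 * π * m * t / N)| * |y (t + δ) - y t|
          + |cos (2 * π * m * t / N) - cos (2 * π * m * (t - δ) / N)| * |y t| :=
        abs_mul_sub_mul_le ..
    _ ≤ 1 * (Lf * (2 * π / N * ∑ k ∈ Icc 1 B, k * (|xa k| + |xb k|)))
          + 2 * π * m / N * (Lf * (|x0| + ∑ k ∈ Icc 1 B, (|xa k| + |xb k|))) := by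
        gcongr; exact abs_cos_le_one _
    _ = _ := by ring

/-- pointwise commutator bound for the regular nonlinearity. -/
theorem regular_nonlinearity_pointwise_commutator_bound
    (N B : ℕ) (hN : 1 ≤ N) (hB : 1 ≤ B)
    (x0 : ℝ) (xa xb : ℕ → ℝ) (x : ℝ → ℝ)
    (hx : ∀ t : ℝ, x t = x0 + ∑ m ∈ Finset.Icc 1 B,
      (xa m * Real.cos (2 * Real.pi * m * t / N)
        + xb m * Real.sin (2 * Real.pi * m * t / N)))
    (f : ℝ → ℝ) (Lf : ℝ) (hLf : 0 ≤ Lf)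
    (hf : ∀ a b : ℝ, |f a - f b| ≤ Lf * |a - b|) (hf0 : f 0 = 0)
    (y : ℝ → ℝ) (hy : ∀ t : ℝ, y t = f (x t)) :
    ∀ (t δ : ℝ), 0 ≤ δ → δ ≤ 1 → ∀ m : ℕ, 1 ≤ m →
      |Real.cos (2 * Real.pi * m * t / N) * y (t + δ)
        - Real.cos (2 * Real.pi * m * (t - δ) / N) * y t|
      ≤ (2 * Real.pi * Lf / N) *
          ((∑ k ∈ Finset.Icc 1 B, (k : ℝ) * (|xa k| + |xb k|))
            + (m : ℝ) * (|x0| + ∑ k ∈ Finset.Icc 1 B, (|xa k| + |xb k|))) :=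
  regular_nonlinearity_pointwise_commutator_bound_general N B x0 xa xb x hx f Lf hLf hf hf0 y hy
end

section
/- Constant-coefficient equivariance error bound for the regular nonlinearity: for every δ with 0 ≤ δ ≤ 1, | (1/N) Σ_{t=0}^{N−1} y(t + δ) − (1/N) Σ_{t=0}^{N−1} y(t) | ≤ (2π L_f / N) · ‖∂x‖₁. -/
open Finset Real

/-!
Each mode `a cos (ω t) + b sin (ω t)` is `|ω| (|a| + |b|)`-Lipschitz, because `sin` and `cos` are
`1`-Lipschitz; hence `x` is Lipschitz with constant `(2π / N) ‖∂x‖₁` and `y = f ∘ x` with constant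
`L_f (2π / N) ‖∂x‖₁`. A shift by `δ ∈ [0, 1]` thus moves every sample of `y` by at most that much,
and so moves their average by at most that much.
-/

lemma abs_trigMode_sub_le (a b ω u v : ℝ) :
    |(a * cos (ω * u) + b * sin (ω * u)) - (a * cos (ω * v) + b * sin (ω * v))|
      ≤ |ω| * (|a| + |b|) * |u - v| := by
  have hphase : |ω * u - ω * v| = |ω| * |u - v| := by rw [← mul_sub, abs_mul]
  calc |(a * cos (ω * u) + b * sin (ω * u)) - (a * cos (ω * v) + b * sin (ω * v))|
      = |a * (cos (ω * u) - cos (ω * v)) + b * (sin (ω * u) - sin (ω * v))| := by ring_nf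
    _ ≤ |a| * |cos (ω * u) - cos (ω * v)| + |b| * |sin (ω * u) - sin (ω * v)| := by
        rw [← abs_mul, ← abs_mul]; exact abs_add_le _ _
    _ ≤ |a| * (|ω| * |u - v|) + |b| * (|ω| * |u - v|) := by
        rw [← hphase]
        exact add_le_add (mul_le_mul_of_nonneg_left (abs_cos_sub_cos_le _ _) (abs_nonneg a))
          (mul_le_mul_of_nonneg_left (abs_sin_sub_sin_le _ _) (abs_nonneg b))
    _ = |ω| * (|a| + |b|) * |u - v| := by ring

lemma abs_trigSum_sub_le {ι : Type*} (s : Finset ι) (a b ω : ι → ℝ) (u v : ℝ) :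
    |∑ m ∈ s, (a m * cos (ω m * u) + b m * sin (ω m * u))
        - ∑ m ∈ s, (a m * cos (ω m * v) + b m * sin (ω m * v))|
      ≤ (∑ m ∈ s, |ω m| * (|a m| + |b m|)) * |u - v| := by
  rw [← sum_sub_distrib, sum_mul]
  exact (abs_sum_le_sum_abs _ _).trans (sum_le_sum fun m _ => abs_trigMode_sub_le _ _ _ _ _)

lemma abs_average_sub_average_le (n : ℕ) (g h : ℕ → ℝ) {C : ℝ} (hC : 0 ≤ C)
    (hgh : ∀ t ∈ range n, |g t - h t| ≤ C) :
    |(1 / (n : ℝ)) * ∑ t ∈ range n, g t - (1 / (n : ℝ)) * ∑ t ∈ range n, h t| ≤ C := by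
  rcases Nat.eq_zero_or_pos n with rfl | hn
  · simpa using hC
  have hsum : |∑ t ∈ range n, g t - ∑ t ∈ range n, h t| ≤ n * C := by
    rw [← sum_sub_distrib]
    simpa using (abs_sum_le_sum_abs _ _).trans (sum_le_card_nsmul _ _ _ hgh)
  rw [← mul_sub, abs_mul, abs_of_nonneg (by positivity), one_div_mul_eq_div,
    div_le_iff₀ (by exact_mod_cast hn), mul_comm]
  exact hsum

theorem constant_coefficient_equivariance_error_bound_general
    (N B : ℕ)
    (x0 : ℝ) (xa xb : ℕ → ℝ) (x : ℝ → ℝ)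
    (hx : ∀ t : ℝ, x t = x0 + ∑ m ∈ Finset.Icc 1 B,
      (xa m * Real.cos (2 * Real.pi * m * t / N)
        + xb m * Real.sin (2 * Real.pi * m * t / N)))
    (f : ℝ → ℝ) (Lf : ℝ) (hLf : 0 ≤ Lf)
    (hf : ∀ a b : ℝ, |f a - f b| ≤ Lf * |a - b|)
    (y : ℝ → ℝ) (hy : ∀ t : ℝ, y t = f (x t)) :
    ∀ (δ : ℝ), 0 ≤ δ → δ ≤ 1 →
      |(1 / (N : ℝ)) * (∑ t ∈ Finset.range N, y ((t : ℝ) + δ))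
        - (1 / (N : ℝ)) * (∑ t ∈ Finset.range N, y (t : ℝ))|
      ≤ (2 * Real.pi * Lf / N) *
          ∑ k ∈ Finset.Icc 1 B, (k : ℝ) * (|xa k| + |xb k|) := by
  intro δ hδ0 hδ1
  set S := ∑ k ∈ Icc 1 B, (k : ℝ) * (|xa k| + |xb k|)
  set ω : ℕ → ℝ := fun m => 2 * π * m / N
  have hx' : ∀ t, x t = x0 + ∑ m ∈ Icc 1 B, (xa m * cos (ω m * t) + xb m * sin (ω m * t)) :=
    fun t => by simp only [hx, ω, div_mul_eq_mul_div]
  have hfreq : ∑ m ∈ Icc 1 B, |ω m| * (|xa m| + |xb m|) = 2 * π / N * S := by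
    rw [mul_sum]
    refine sum_congr rfl fun m _ => ?_
    rw [abs_of_nonneg (by positivity)]
    ring
  refine abs_average_sub_average_le N _ _ (by positivity) fun t _ => ?_
  calc |y (t + δ) - y t|
      ≤ Lf * |x (t + δ) - x t| := by rw [hy, hy]; exact hf _ _
    _ ≤ Lf * (2 * π / N * S * |t + δ - t|) := by
        rw [hx', hx', add_sub_add_left_eq_sub, ← hfreq]
        gcongr
        exact abs_trigSum_sub_le _ _ _ _ _ _
    _ ≤ Lf * (2 * π / N * S * 1) := by
        rw [add_sub_cancel_left, abs_of_nonneg hδ0]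
        gcongr
    _ = 2 * π * Lf / N * S := by ring

/-- constant-coefficient equivariance error bound for the
regular nonlinearity. -/
theorem constant_coefficient_equivariance_error_bound
    (N B : ℕ) (hN : 1 ≤ N) (hB : 1 ≤ B)
    (x0 : ℝ) (xa xb : ℕ → ℝ) (x : ℝ → ℝ)
    (hx : ∀ t : ℝ, x t = x0 + ∑ m ∈ Finset.Icc 1 B,
      (xa m * Real.cos (2 * Real.pi * m * t / N)
        + xb m * Real.sin (2 * Real.pi * m * t / N)))
    (f : ℝ → ℝ) (Lf : ℝ) (hLf : 0 ≤ Lf)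
    (hf : ∀ a b : ℝ, |f a - f b| ≤ Lf * |a - b|)
    (y : ℝ → ℝ) (hy : ∀ t : ℝ, y t = f (x t)) :
    ∀ (δ : ℝ), 0 ≤ δ → δ ≤ 1 →
      |(1 / (N : ℝ)) * (∑ t ∈ Finset.range N, y ((t : ℝ) + δ))
        - (1 / (N : ℝ)) * (∑ t ∈ Finset.range N, y (t : ℝ))|
      ≤ (2 * Real.pi * Lf / N) *
          ∑ k ∈ Finset.Icc 1 B, (k : ℝ) * (|xa k| + |xb k|) :=
  constant_coefficient_equivariance_error_bound_general N B x0 xa xb x hx f Lf hLf hf y hy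
end
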